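/- Let p ∈ {1,2,3}, let k > 0, c₀, c₁, c₂ ≥ 0, let K ⊂ ℝ³ be compact and let 0 < a ≤ b. For M ∈ ℕ define S_M(x,t) := Σ_{ω ∈ ℤ^p, ‖ω‖_∞ ≤ M} exp(−k‖x + ι(ω)‖₂²/(4t))·(c₀ + c₁‖x + ι(ω)‖₂ + c₂‖x + ι(ω)‖₂²). Then as M → ∞ the functions S_M converge uniformly on K × [a,b] to the full sum S(x,t) := Σ_{ω ∈ ℤ^p} exp(−k‖x + ι(ω)‖₂²/(4t))·(c₀ + c₁‖x + ι(ω)‖₂ + c₂‖x + ι(ω)‖₂²). -/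
import Mathlib


/-- For `p ∈ {1,2,3}`, the embedding `ι : ℤ^p → ℝ³` sending `(ω₁,…,ω_p)` to the vector
whose first `p` coordinates are `ω₁,…,ω_p` and whose remaining coordinates are `0`. -/
noncomputable def iotaLat (p : ℕ) (ω : Fin p → ℤ) : EuclideanSpace ℝ (Fin 3) :=
  (WithLp.equiv 2 (Fin 3 → ℝ)).symm fun i => if h : (i : ℕ) < p then (ω ⟨i, h⟩ : ℝ) else 0

lemma summable_int_exp_neg_mul_sq {β : ℝ} (hβ : 0 < β) :
    Summable fun n : ℤ => Real.exp (-β * (n : ℝ) ^ 2) := by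
  have key : Summable fun n : ℕ => Real.exp (-β * (n : ℝ) ^ 2) := by
    refine Summable.of_nonneg_of_le (fun n => (Real.exp_pos _).le) (fun n => ?_)
      (summable_geometric_of_lt_one (Real.exp_pos _).le
        (show Real.exp (-β) < 1 from Real.exp_lt_one_iff.mpr (by linarith)))
    rw [← Real.exp_nat_mul]
    apply Real.exp_le_exp.mpr
    have : (n : ℝ) ≤ (n : ℝ) ^ 2 := by
      exact_mod_cast Nat.le_self_pow two_ne_zero n
    nlinarith
  apply Summable.of_nat_of_neg
  · exact key
  · simpa using key

lemma summable_pi_exp (p : ℕ) {β : ℝ} (hβ : 0 < β) :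
    Summable fun ω : Fin p → ℤ => ∏ i, Real.exp (-β * (ω i : ℝ) ^ 2) := by
  induction p with
  | zero => exact .of_finite
  | succ n ih =>
    have := ((summable_int_exp_neg_mul_sq hβ).mul_of_nonneg ih
      (fun m => (Real.exp_pos _).le)
      (fun ω => Finset.prod_nonneg fun i _ => (Real.exp_pos _).le))
    have h2 := this.comp_injective (Fin.consEquiv (fun _ : Fin (n+1) => ℤ)).symm.injective
    refine h2.congr fun ω => ?_
    simp only [Function.comp_apply, Fin.consEquiv_symm_apply]
    rw [Fin.prod_univ_succ]
    rfl

lemma norm_iotaLat_sq (p : ℕ) (hp : p = 1 ∨ p = 2 ∨ p = 3) (ω : Fin p → ℤ) :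
    ‖iotaLat p ω‖ ^ 2 = ∑ i, ((ω i : ℝ)) ^ 2 := by
  have h : ‖iotaLat p ω‖ ^ 2 = ∑ i : Fin 3, ‖iotaLat p ω i‖ ^ 2 := by
    rw [EuclideanSpace.norm_eq, Real.sq_sqrt]
    positivity
  rw [h]
  rcases hp with rfl | rfl | rfl <;>
    simp [iotaLat, Fin.sum_univ_three, Fin.sum_univ_two, Real.norm_eq_abs, sq_abs, Fin.sum_univ_succ]

set_option maxHeartbeats 1000000 in
/-- Let `p ∈ {1,2,3}`, `k > 0`, `c₀,c₁,c₂ ≥ 0`, `K ⊂ ℝ³` compact and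
`0 < a ≤ b`.  The partial sums `S_M` of the lattice periodization of the scalar majorant
of the fundamental solution (summed over `ω ∈ ℤ^p` with `‖ω‖_∞ ≤ M`, i.e. over the box
`Finset.Icc (-M) M` in `ℤ^p`) converge uniformly on `K × [a,b]` to the full sum. -/
theorem eisenstein_partial_sums_tendstoUniformlyOn (p : ℕ) (hp : p = 1 ∨ p = 2 ∨ p = 3)
    (k c₀ c₁ c₂ : ℝ) (hk : 0 < k) (h0 : 0 ≤ c₀) (h1 : 0 ≤ c₁) (h2 : 0 ≤ c₂)
    (K : Set (EuclideanSpace ℝ (Fin 3))) (hK : IsCompact K)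
    (a b : ℝ) (ha : 0 < a) (hab : a ≤ b) :
    TendstoUniformlyOn
      (fun (M : ℕ) (q : EuclideanSpace ℝ (Fin 3) × ℝ) =>
        ∑ ω ∈ Finset.Icc (fun _ : Fin p => -(M : ℤ)) (fun _ : Fin p => (M : ℤ)),
          Real.exp (-k * ‖q.1 + iotaLat p ω‖ ^ 2 / (4 * q.2)) *
            (c₀ + c₁ * ‖q.1 + iotaLat p ω‖ + c₂ * ‖q.1 + iotaLat p ω‖ ^ 2))
      (fun q : EuclideanSpace ℝ (Fin 3) × ℝ =>
        ∑' ω : Fin p → ℤ,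
          Real.exp (-k * ‖q.1 + iotaLat p ω‖ ^ 2 / (4 * q.2)) *
            (c₀ + c₁ * ‖q.1 + iotaLat p ω‖ + c₂ * ‖q.1 + iotaLat p ω‖ ^ 2))
      Filter.atTop (K ×ˢ Set.Icc a b) := by
  have hb : 0 < b := lt_of_lt_of_le ha hab
  -- bound on K
  obtain ⟨R, hR0, hR⟩ : ∃ R : ℝ, 0 ≤ R ∧ ∀ x ∈ K, ‖x‖ ≤ R := by
    obtain ⟨R, hR⟩ := hK.isBounded.exists_norm_le
    exact ⟨max R 0, le_max_right _ _, fun x hx => (hR x hx).trans (le_max_left _ _)⟩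
  set δ : ℝ := k / (8 * b) with hδdef
  have hδ : 0 < δ := by positivity
  set β : ℝ := k / (16 * b) with hβdef
  have hβ : 0 < β := by positivity
  set D : ℝ := (c₀ + c₁ * (1 + 1 / δ) + c₂ * (1 / δ)) * Real.exp (k * R ^ 2 / (8 * b)) with hD
  set u : (Fin p → ℤ) → ℝ := fun ω => D * Real.exp (-β * ‖iotaLat p ω‖ ^ 2) with hu_def
  have hu : Summable u := by
    apply Summable.mul_left
    have : (fun ω : Fin p → ℤ => Real.exp (-β * ‖iotaLat p ω‖ ^ 2)) =
        fun ω : Fin p → ℤ => ∏ i, Real.exp (-β * (ω i : ℝ) ^ 2) := by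
      funext ω
      rw [norm_iotaLat_sq p hp, Finset.mul_sum, ← Real.exp_sum]
    rw [this]
    exact summable_pi_exp p hβ
  have hfu : ∀ (ω : Fin p → ℤ) (q : EuclideanSpace ℝ (Fin 3) × ℝ),
      q ∈ K ×ˢ Set.Icc a b →
      ‖Real.exp (-k * ‖q.1 + iotaLat p ω‖ ^ 2 / (4 * q.2)) *
        (c₀ + c₁ * ‖q.1 + iotaLat p ω‖ + c₂ * ‖q.1 + iotaLat p ω‖ ^ 2)‖ ≤ u ω := by
    rintro ω ⟨x, t⟩ ⟨hx, ht⟩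
    simp only at hx ht ⊢
    have hta : a ≤ t := ht.1
    have htb : t ≤ b := ht.2
    have ht0 : 0 < t := lt_of_lt_of_le ha hta
    set r : ℝ := ‖x + iotaLat p ω‖ with hr
    have hr0 : 0 ≤ r := norm_nonneg _
    set P : ℝ := c₀ + c₁ * r + c₂ * r ^ 2 with hP
    have hP0 : 0 ≤ P := by positivity
    rw [Real.norm_eq_abs, abs_of_nonneg (mul_nonneg (Real.exp_pos _).le hP0)]
    -- step 1 : replace t by b
    have step1 : Real.exp (-k * r ^ 2 / (4 * t)) ≤ Real.exp (-k * r ^ 2 / (4 * b)) := by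
      apply Real.exp_le_exp.mpr
      rw [neg_mul, neg_div, neg_div, neg_le_neg_iff]
      exact div_le_div_of_nonneg_left (by positivity) (by positivity) (by linarith)
    -- split exponential
    have hsplit : Real.exp (-k * r ^ 2 / (4 * b)) =
        Real.exp (-δ * r ^ 2) * Real.exp (-δ * r ^ 2) := by
      rw [← Real.exp_add]
      congr 1
      rw [hδdef]
      field_simp
      ring
    -- bound the polynomial part
    have hpoly : Real.exp (-δ * r ^ 2) * P ≤ c₀ + c₁ * (1 + 1 / δ) + c₂ * (1 / δ) := by
      set e : ℝ := Real.exp (-δ * r ^ 2) with he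
      have he0 : 0 < e := Real.exp_pos _
      have he1 : e ≤ 1 := Real.exp_le_one_iff.mpr (by nlinarith)
      have hsq : r ^ 2 * e ≤ 1 / δ := by
        have hE : δ * r ^ 2 ≤ Real.exp (δ * r ^ 2) := by
          nlinarith [Real.add_one_le_exp (δ * r ^ 2), mul_nonneg hδ.le (sq_nonneg r)]
        have hEpos : (0:ℝ) < Real.exp (δ * r ^ 2) := Real.exp_pos _
        have heE : e = 1 / Real.exp (δ * r ^ 2) := by
          rw [he, one_div, ← Real.exp_neg]
          congr 1
          ring
        rw [heE, mul_one_div, div_le_div_iff₀ hEpos hδ]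
        nlinarith
      have hδinv : (0:ℝ) ≤ 1 / δ := by positivity
      have hlin : r * e ≤ 1 + 1 / δ := by
        rcases le_or_gt r 1 with h | h
        · nlinarith
        · have hrr : r ≤ r ^ 2 := by nlinarith
          have h' : r * e ≤ r ^ 2 * e := mul_le_mul_of_nonneg_right hrr he0.le
          linarith
      have expand : e * P = c₀ * e + c₁ * (r * e) + c₂ * (r ^ 2 * e) := by rw [hP]; ring
      rw [expand]
      have hc0 : c₀ * e ≤ c₀ := by nlinarith
      have hc1 : c₁ * (r * e) ≤ c₁ * (1 + 1 / δ) := mul_le_mul_of_nonneg_left hlin h1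
      have hc2 : c₂ * (r ^ 2 * e) ≤ c₂ * (1 / δ) := mul_le_mul_of_nonneg_left hsq h2
      linarith
    -- bound the remaining gaussian by a function of ω
    have hgauss : Real.exp (-δ * r ^ 2) ≤
        Real.exp (k * R ^ 2 / (8 * b)) * Real.exp (-β * ‖iotaLat p ω‖ ^ 2) := by
      rw [← Real.exp_add]
      apply Real.exp_le_exp.mpr
      have htri : ‖iotaLat p ω‖ ≤ r + R := by
        have : iotaLat p ω = (x + iotaLat p ω) - x := by abel
        calc ‖iotaLat p ω‖ = ‖(x + iotaLat p ω) - x‖ := by rw [← this]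
        _ ≤ ‖x + iotaLat p ω‖ + ‖x‖ := norm_sub_le _ _
        _ ≤ r + R := by have := hR x hx; linarith
      have hs0 : 0 ≤ ‖iotaLat p ω‖ := norm_nonneg _
      have key : ‖iotaLat p ω‖ ^ 2 / 2 ≤ r ^ 2 + R ^ 2 := by
        have hsq : ‖iotaLat p ω‖ ^ 2 ≤ (r + R) ^ 2 := pow_le_pow_left₀ hs0 htri 2
        nlinarith [sq_nonneg (r - R)]
      have hβδ : β = δ / 2 := by rw [hβdef, hδdef]; ring
      have hδk : δ = k / (8 * b) := hδdef
      have : k * R ^ 2 / (8 * b) = δ * R ^ 2 := by rw [hδk]; ring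
      rw [this, hβδ]
      nlinarith
    calc Real.exp (-k * r ^ 2 / (4 * t)) * P
        ≤ Real.exp (-k * r ^ 2 / (4 * b)) * P := mul_le_mul_of_nonneg_right step1 hP0
      _ = Real.exp (-δ * r ^ 2) * (Real.exp (-δ * r ^ 2) * P) := by rw [hsplit]; ring
      _ ≤ (Real.exp (k * R ^ 2 / (8 * b)) * Real.exp (-β * ‖iotaLat p ω‖ ^ 2)) *
            (c₀ + c₁ * (1 + 1 / δ) + c₂ * (1 / δ)) := by
          apply mul_le_mul hgauss hpoly (by positivity) (by positivity)
      _ = u ω := by rw [hu_def, hD]; ring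
  have H := tendstoUniformlyOn_tsum hu hfu
  have hmono : Monotone (fun M : ℕ =>
      Finset.Icc (fun _ : Fin p => -(M : ℤ)) (fun _ : Fin p => (M : ℤ))) := by
    intro M N hMN
    apply Finset.Icc_subset_Icc
    · intro i; simp only; omega
    · intro i; simp only; omega
  have hcover : ∀ ω : Fin p → ℤ, ∃ M : ℕ,
      ω ∈ Finset.Icc (fun _ : Fin p => -(M : ℤ)) (fun _ : Fin p => (M : ℤ)) := by
    intro ω
    refine ⟨Finset.univ.sup fun i => (ω i).natAbs, ?_⟩
    rw [Finset.mem_Icc]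
    constructor <;> intro i <;>
      have := Finset.le_sup (f := fun i => (ω i).natAbs) (Finset.mem_univ i) <;>
      simp only [Pi.le_def] at * <;> omega
  have htendsto := Filter.tendsto_atTop_finset_of_monotone hmono hcover
  intro v hv
  exact htendsto.eventually (H v hv)
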